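/- The Price of Anarchy of the n-user selfish routing game on the load-balancing network with uniform cross-link splitting is arbitrarily large: for every integer n ≥ 2, every r > 0, L > 0 and every M > 0, there exist δ, c with 0 < δ < L < c and cδ < rL such that the game has a Nash equilibrium p ∈ [0, r]ⁿ (each user i's strategy pᵢ minimizes Jᵢ given the others' strategies) with Σᵢ Jᵢ(p) > M · n·r·L, where n·r·L is the socially optimal total cost. -/

import Mathlib

open Finset

/-- Elbow latency function with parameters `r, L, δ`. -/
noncomputable def T (r L δ x : ℝ) : ℝ := max 0 (L / δ * (x - r) + L)

/-- Total flow on local link `j` under profile `p` (uniform cross-link splitting). -/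
noncomputable def flow (n : ℕ) (r : ℝ) (p : Fin n → ℝ) (j : Fin n) : ℝ :=
  p j + ∑ i ∈ Finset.univ.erase j, (r - p i) / ((n : ℝ) - 1)

/-- Cost of user `i` in the `n`-user load-balancing game with uniform cross-link splitting. -/
noncomputable def J (n : ℕ) (r L δ c : ℝ) (p : Fin n → ℝ) (i : Fin n) : ℝ :=
  p i * T r L δ (flow n r p i) +
    ∑ j ∈ Finset.univ.erase i, (r - p i) / ((n : ℝ) - 1) * (c + T r L δ (flow n r p j))

/-!
At the symmetric profile `pᵢ = a` every link carries exactly `r`, so all latencies sit at the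
elbow value `L` and each user pays `a L + (r - a)(c + L)`. When user `i` deviates to `y`, the
latencies move linearly in `y`; replacing the clamped latencies by their linear parts only lowers
the deviation cost, and that linear cost is a quadratic in `y` with positive leading coefficient.
Choosing `c (n - 1) = (L / δ)(n a - r)` makes `y = a` its vertex, so the symmetric profile is an
equilibrium. With `a = r (n + 1) / (2n)` this forces `c δ = r L / 2`, while the total cost
`n r L + r (n - 1) c / 2` grows without bound in `c`.
-/

def IsNashEquilibrium (n : ℕ) (r L δ c : ℝ) (p : Fin n → ℝ) : Prop :=
  (∀ i, p i ∈ Set.Icc (0 : ℝ) r) ∧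
    ∀ i : Fin n, ∀ y ∈ Set.Icc (0 : ℝ) r,
      J n r L δ c p i ≤ J n r L δ c (Function.update p i y) i

lemma T_add_self (r L δ t : ℝ) : T r L δ (r + t) = max 0 (L / δ * t + L) := by
  simp only [T, add_sub_cancel_left]

lemma T_self {r L : ℝ} (δ : ℝ) (hL : 0 ≤ L) : T r L δ r = L := by
  simpa [hL] using T_add_self r L δ 0

/-- The right side is the cost of deviating from `a` to `y` when the own latency has slope `u` and
each of the `k` other latencies slope `u / k`; `hc` is the first-order condition at `y = a`. -/
lemma symmetric_cost_le_deviation_cost {k u c L r a y : ℝ} (hk : 0 < k) (hu : 0 ≤ u)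
    (hy : y ∈ Set.Icc 0 r) (hc : c * k = u * ((k + 1) * a - r)) :
    a * L + (r - a) * (c + L) ≤
      y * max 0 (u * (y - a) + L) + (r - y) * (c + max 0 (u * (a - y) / k + L)) := by
  obtain ⟨hy0, hyr⟩ := hy
  have hquadratic : y * (u * (y - a) + L) + (r - y) * (c + (u * (a - y) / k + L)) =
      a * L + (r - a) * (c + L) + u * (k + 1) / k * (y - a) ^ 2 := by
    field_simp
    linear_combination (a - y) * hc
  have hclamp_own : y * (u * (y - a) + L) ≤ y * max 0 (u * (y - a) + L) :=
    mul_le_mul_of_nonneg_left (le_max_right _ _) hy0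
  have hclamp_other : (r - y) * (c + (u * (a - y) / k + L)) ≤
      (r - y) * (c + max 0 (u * (a - y) / k + L)) :=
    mul_le_mul_of_nonneg_left (by gcongr; exact le_max_right _ _) (sub_nonneg.2 hyr)
  have hcurvature : 0 ≤ u * (k + 1) / k * (y - a) ^ 2 := by positivity
  linarith

lemma sum_univ_erase_const {n : ℕ} (i : Fin n) (x : ℝ) :
    ∑ _j ∈ univ.erase i, x = ((n : ℝ) - 1) * x := by
  rw [sum_const, card_erase_of_mem (mem_univ i), card_univ, Fintype.card_fin, nsmul_eq_mul,
    Nat.cast_sub i.pos, Nat.cast_one]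

lemma sum_update_const {n : ℕ} (a y : ℝ) (i : Fin n) :
    ∑ j, Function.update (fun _ => a) i y j = y + ((n : ℝ) - 1) * a := by
  rw [sum_update_of_mem (mem_univ i), sdiff_singleton_eq_erase, sum_univ_erase_const]

section SymmetricProfile

variable {n : ℕ} (hn : 2 ≤ n)
include hn

lemma cast_sub_one_pos : (0 : ℝ) < (n : ℝ) - 1 := by
  have : (2 : ℝ) ≤ n := by exact_mod_cast hn
  linarith

lemma flow_eq (r : ℝ) (p : Fin n → ℝ) (j : Fin n) :
    flow n r p j = p j + r - (∑ i, p i - p j) / ((n : ℝ) - 1) := by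
  rw [flow, ← sum_div, sum_sub_distrib, sum_univ_erase_const, sum_erase_eq_sub (mem_univ j)]
  field_simp [(cast_sub_one_pos hn).ne']
  ring

lemma flow_const (r a : ℝ) (j : Fin n) : flow n r (fun _ => a) j = r := by
  rw [flow_eq hn, sum_const, card_univ, Fintype.card_fin, nsmul_eq_mul]
  field_simp [(cast_sub_one_pos hn).ne']
  ring

lemma flow_update_const_self (r a y : ℝ) (i : Fin n) :
    flow n r (Function.update (fun _ => a) i y) i = r + (y - a) := by
  rw [flow_eq hn, sum_update_const, Function.update_self]
  field_simp [(cast_sub_one_pos hn).ne']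
  ring

lemma flow_update_const_of_ne (r a y : ℝ) {i j : Fin n} (hji : j ≠ i) :
    flow n r (Function.update (fun _ => a) i y) j = r + (a - y) / ((n : ℝ) - 1) := by
  rw [flow_eq hn, sum_update_const, Function.update_of_ne hji]
  field_simp [(cast_sub_one_pos hn).ne']
  ring

lemma J_const (r L δ c a : ℝ) (hL : 0 ≤ L) (i : Fin n) :
    J n r L δ c (fun _ => a) i = a * L + (r - a) * (c + L) := by
  simp only [J, flow_const hn, T_self δ hL]
  rw [sum_univ_erase_const, ← mul_assoc, mul_div_cancel₀ _ (cast_sub_one_pos hn).ne']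

lemma sum_J_const (r L δ c a : ℝ) (hL : 0 ≤ L) :
    ∑ i, J n r L δ c (fun _ => a) i = n * (a * L + (r - a) * (c + L)) := by
  rw [sum_congr rfl fun i _ => J_const hn r L δ c a hL i, sum_const, card_univ,
    Fintype.card_fin, nsmul_eq_mul]

lemma J_update_const_self (r L δ c a y : ℝ) (i : Fin n) :
    J n r L δ c (Function.update (fun _ => a) i y) i =
      y * max 0 (L / δ * (y - a) + L) +
        (r - y) * (c + max 0 (L / δ * (a - y) / ((n : ℝ) - 1) + L)) := by
  simp only [J, Function.update_self, flow_update_const_self hn, T_add_self]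
  rw [sum_congr rfl fun j hj => by
      rw [flow_update_const_of_ne hn r a y (ne_of_mem_erase hj), T_add_self],
    sum_univ_erase_const, ← mul_assoc, mul_div_cancel₀ _ (cast_sub_one_pos hn).ne',
    mul_div_assoc]

lemma isNashEquilibrium_const {r L δ c a : ℝ} (hL : 0 ≤ L) (hδ : 0 ≤ δ)
    (ha : a ∈ Set.Icc 0 r) (hfoc : c * ((n : ℝ) - 1) = L / δ * (n * a - r)) :
    IsNashEquilibrium n r L δ c fun _ => a := by
  refine ⟨fun _ => ha, fun i y hy => ?_⟩
  rw [J_const hn r L δ c a hL, J_update_const_self hn]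
  exact symmetric_cost_le_deviation_cost (cast_sub_one_pos hn) (by positivity) hy
    (by rw [hfoc]; ring)

lemma isNashEquilibrium_elbow {r L c : ℝ} (hr : 0 < r) (hL : 0 < L) (hc : 0 < c) :
    IsNashEquilibrium n r L (r * L / (2 * c)) c fun _ => r * (n + 1) / (2 * n) := by
  have hn0 : (0 : ℝ) < n := by linarith [cast_sub_one_pos hn]
  refine isNashEquilibrium_const hn hL.le (by positivity) ⟨by positivity, ?_⟩ ?_
  · rw [div_le_iff₀ (by positivity)]
    nlinarith [cast_sub_one_pos hn]
  · field_simp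
    ring

end SymmetricProfile

theorem n_user_price_of_anarchy_unbounded
    (n : ℕ) (hn : 2 ≤ n) (r L : ℝ) (hr : 0 < r) (hL : 0 < L) (M : ℝ) (hM : 0 < M) :
    ∃ δ c : ℝ, 0 < δ ∧ δ < L ∧ L < c ∧ c * δ < r * L ∧
      ∃ p : Fin n → ℝ, (∀ i, p i ∈ Set.Icc (0 : ℝ) r) ∧
        -- p is a Nash equilibrium of the selfish game
        (∀ i : Fin n, ∀ y ∈ Set.Icc (0 : ℝ) r,
          J n r L δ c p i ≤ J n r L δ c (Function.update p i y) i) ∧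
        (∑ i, J n r L δ c p i) > M * ((n : ℝ) * r * L) := by
  have hn1 : (1 : ℝ) ≤ n - 1 := by
    have : (2 : ℝ) ≤ n := by exact_mod_cast hn
    linarith
  set c := L + r + 2 * M * n * L with hc_def
  have hMnL : 0 < M * n * L := by positivity
  have hc : 0 < c := by positivity
  obtain ⟨hfeasible, hbest⟩ := isNashEquilibrium_elbow hn hr hL hc
  refine ⟨r * L / (2 * c), c, by positivity, ?_, by linarith, ?_, _, hfeasible, hbest, ?_⟩
  · rw [div_lt_iff₀ (by positivity)]
    nlinarith
  · have : c * (r * L / (2 * c)) = r * L / 2 := by field_simp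
    linarith [mul_pos hr hL]
  · have htotal : (n : ℝ) * (r * (n + 1) / (2 * n) * L + (r - r * (n + 1) / (2 * n)) * (c + L)) =
        n * r * L + r * (n - 1) * c / 2 := by
      field_simp
      ring
    have hcost : M * (n * r * L) < r * (n - 1) * c / 2 := by
      nlinarith [mul_le_mul_of_nonneg_left hn1 (mul_pos hr hc).le]
    rw [sum_J_const hn _ _ _ _ _ hL.le, htotal]
    linarith [mul_pos (mul_pos (by positivity : (0 : ℝ) < n) hr) hL]
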